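/- arXiv:0802.3654 — 3 statements merged into one kernel-verified Lean document; each statement's English description precedes it below -/
import Mathlib

section
/- Let d ≥ 1. There is a constant c depending only on d such that for every N ≥ 2 and every function g : T_N → ℝ vanishing outside S (the image in T_N of the interior boundary of the box {0,…,N−1}^d), there exists a flow J on the edges of T_N with div J(x) + g(x) = ν(g) for every x ∈ T_N, and |J|_∞ ≤ c |g|_∞. -/
open Filter Topology

noncomputable section

/-- The lattice `ℤ^d`. -/
abbrev Zlat (d : ℕ) : Type := Fin d → ℤ

/-- The discrete torus `(ℤ/Nℤ)^d`. -/
abbrev Torus (d N : ℕ) : Type := Fin d → ZMod N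

/-- The canonical projection `π : ℤ^d → (ℤ/Nℤ)^d`. -/
def latProj (d N : ℕ) (z : Zlat d) : Torus d N := fun i => (z i : ZMod N)

/-- Adjacency on `ℤ^d`: `x ~ x'` iff `|x - x'|_1 = 1`. -/
def latAdj {d : ℕ} (x x' : Zlat d) : Prop := (∑ i, (x i - x' i).natAbs) = 1

instance {d : ℕ} (x x' : Zlat d) : Decidable (latAdj x x') := by
  unfold latAdj; infer_instance

/-- Adjacency on the torus: `x ~ x'` iff the quotient `l^1`-distance equals `1`. -/
def torusAdj {d N : ℕ} (x x' : Torus d N) : Prop :=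
  (∑ i, min ((x i - x' i).val) (N - (x i - x' i).val)) = 1

instance {d N : ℕ} (x x' : Torus d N) : Decidable (torusAdj x x') := by
  unfold torusAdj; infer_instance

/-- The `l^∞`-distance on the torus. -/
def torusDistInf {d N : ℕ} (x y : Torus d N) : ℕ :=
  Finset.univ.sup fun i => min ((x i - y i).val) (N - (x i - y i).val)

/-- The `l^∞`-distance on `ℤ^d`. -/
def latDistInf {d : ℕ} (x y : Zlat d) : ℕ :=
  Finset.univ.sup fun i => (x i - y i).natAbs

/-- Dirichlet form on `ℤ^d`. -/
def latDirichlet (d : ℕ) (f : Zlat d → ℝ) : ℝ :=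
  (1 / (4 * (d : ℝ))) * ∑' p : Zlat d × Zlat d,
    if latAdj p.1 p.2 then (f p.1 - f p.2) ^ 2 else 0

/-- Capacity of a set `A ⊆ ℤ^d`, defined through the Dirichlet principle. -/
def capacity (d : ℕ) (A : Set (Zlat d)) : ℝ :=
  sInf { E | ∃ f : Zlat d → ℝ, (Function.support f).Finite ∧
    (∀ x ∈ A, f x = 1) ∧ E = latDirichlet d f }

/-- Dirichlet form on the torus. -/
def torusDirichlet (d N : ℕ) (f : Torus d N → ℝ) : ℝ :=
  (1 / (4 * (d : ℝ))) * ∑' p : Torus d N × Torus d N,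
    if torusAdj p.1 p.2 then (f p.1 - f p.2) ^ 2 else 0

/-- A flow on the edges of a graph: antisymmetric on edges, zero off edges. -/
def IsFlow {α : Type*} (adj : α → α → Prop) (I : α → α → ℝ) : Prop :=
  ∀ x x', (adj x x' → I x x' = - I x' x) ∧ (¬ adj x x' → I x x' = 0)

/-- Divergence of a flow on `ℤ^d`: the net flow out of `x`. -/
def latDiv (d : ℕ) (I : Zlat d → Zlat d → ℝ) (x : Zlat d) : ℝ :=
  ∑' x', if latAdj x x' then I x x' else 0

/-- Energy dissipated by a flow on `ℤ^d`. -/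
def latEnergy (d : ℕ) (I : Zlat d → Zlat d → ℝ) : ℝ :=
  (d : ℝ) * ∑' p : Zlat d × Zlat d, (I p.1 p.2) ^ 2

/-- Divergence of a flow on the torus. -/
def torusDiv {d N : ℕ} (I : Torus d N → Torus d N → ℝ) (x : Torus d N) : ℝ :=
  ∑' x', if torusAdj x x' then I x x' else 0

/-- Energy dissipated by a flow on the torus. -/
def torusEnergy (d N : ℕ) (I : Torus d N → Torus d N → ℝ) : ℝ :=
  (d : ℝ) * ∑' p : Torus d N × Torus d N, (I p.1 p.2) ^ 2

/-- Sup-norm of a function on the torus. -/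
def torusSupNorm {d N : ℕ} (f : Torus d N → ℝ) : ℝ := ⨆ x, |f x|

/-- Sup-norm of a flow on the torus. -/
def torusFlowSup {d N : ℕ} (I : Torus d N → Torus d N → ℝ) : ℝ :=
  ⨆ p : Torus d N × Torus d N, |I p.1 p.2|

/-- Integral with respect to the uniform distribution `ν` on the torus. -/
def nu (d N : ℕ) (f : Torus d N → ℝ) : ℝ := (∑' x, f x) / (N : ℝ) ^ d

/-- The `2d` signed unit steps, as elements of the torus. -/
def torusStep (d N : ℕ) (p : Fin d × Bool) : Torus d N :=
  if p.2 then latProj d N (Pi.single p.1 1) else - latProj d N (Pi.single p.1 1)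

/-- The `2d` signed unit steps in `ℤ^d`. -/
def latStep (d : ℕ) (p : Fin d × Bool) : Zlat d :=
  if p.2 then Pi.single p.1 1 else - Pi.single p.1 1

/-- Position at time `m` of the walk started at `x0` with steps `ξ`. -/
def walkPos {d N : ℕ} {n : ℕ} (x0 : Torus d N) (ξ : Fin n → Fin d × Bool) (m : ℕ) :
    Torus d N :=
  x0 + ∑ k ∈ Finset.univ.filter (fun k : Fin n => (k : ℕ) < m), torusStep d N (ξ k)

open Classical in
/-- Probability that the simple random walk on the torus, started from the uniform
distribution, avoids `B` at all times `0, 1, …, n`. -/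
def avoidProb (d N : ℕ) (B : Set (Torus d N)) (n : ℕ) : ℝ :=
  ((N : ℝ) ^ d * (2 * (d : ℝ)) ^ n)⁻¹ *
    ∑' w : Torus d N × (Fin n → Fin d × Bool),
      if ∀ m ≤ n, walkPos w.1 w.2 m ∉ B then 1 else 0

/-- Expected entrance time `E[H_B]` of the uniform-start walk into `B`,
via `E[H_B] = ∑_{n ≥ 0} P[H_B > n]`. -/
def expHit (d N : ℕ) (B : Set (Torus d N)) : ℝ := ∑' n : ℕ, avoidProb d N B n

open Classical in
/-- `P_x^{ℤ^d}[H_A < ∞]`: probability that the walk on `ℤ^d` started at `x` ever visits `A`. -/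
def latHitProb (d : ℕ) (A : Set (Zlat d)) (x : Zlat d) : ℝ :=
  ⨆ n : ℕ, ((2 * (d : ℝ)) ^ n)⁻¹ *
    ((Finset.univ.filter (fun ξ : Fin n → Fin d × Bool =>
      ∃ m ≤ n,
        (x + ∑ k ∈ Finset.univ.filter (fun k : Fin n => (k : ℕ) < m), latStep d (ξ k)) ∈ A)).card : ℝ)

/-- The box `T'_N = {0, …, N-1}^d ⊆ ℤ^d`. -/
def boxSet (d N : ℕ) : Set (Zlat d) := {z | ∀ i, 0 ≤ z i ∧ z i ≤ (N : ℤ) - 1}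

/-- The interior boundary `∂_int T'_N` of the box. -/
def boxBdry (d N : ℕ) : Set (Zlat d) :=
  {z | z ∈ boxSet d N ∧ ∃ i, z i = 0 ∨ z i = (N : ℤ) - 1}

/-- `S`: the image in the torus of the interior boundary of the box. -/
def torusBdry (d N : ℕ) : Set (Torus d N) := latProj d N '' boxBdry d N

/-- The bijection `ψ` identifying the torus with the box `{0, …, N-1}^d`. -/
def psi (d N : ℕ) (x : Torus d N) : Zlat d := fun i => ((x i).val : ℤ)


/-!
Split `g = ∑ i, g_i`, where `g_i` is the part of `g` on the faces `{x_i = 0} ∪ {x_i = -1}`,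
each point of `S` being assigned to the least such `i`. Every line in direction `i` meets the
support of `g_i` in at most two points, so solving the one-dimensional Poisson equation on these
lines (cumulative sums of the deviations from the line mean) costs a flow of size `8 |g|_∞` and
replaces `g_i` by its line averages, which are at most `2 |g|_∞ / N`. Averaging successively in
all `d` directions then costs `4 N · 2 |g|_∞ / N` per direction and leaves the constant `ν(g_i)`.
Summing over `i` gives `|J|_∞ ≤ 8 d (d + 1) |g|_∞`.
-/

open Finset Function

namespace TorusFlow

section Flows

variable {α : Type*} {adj : α → α → Prop}

lemma isFlow_zero : IsFlow adj 0 :=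
  fun _ _ => ⟨fun _ => by simp, fun _ => rfl⟩

lemma isFlow_add {I J : α → α → ℝ} (hI : IsFlow adj I) (hJ : IsFlow adj J) :
    IsFlow adj (I + J) := fun x x' =>
  ⟨fun h => by simp [(hI x x').1 h, (hJ x x').1 h]; ring,
    fun h => by simp [(hI x x').2 h, (hJ x x').2 h]⟩

lemma isFlow_sum {ι : Type*} (s : Finset ι) {J : ι → α → α → ℝ}
    (hJ : ∀ i ∈ s, IsFlow adj (J i)) : IsFlow adj (∑ i ∈ s, J i) := by
  classical
  induction s using Finset.induction_on with
  | empty => exact isFlow_zero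
  | insert i s hi ih =>
    rw [sum_insert hi]
    exact isFlow_add (hJ i (mem_insert_self i s)) (ih fun j hj => hJ j (mem_insert_of_mem hj))

end Flows

lemma sum_ite_isLeast {ι M : Type*} [Fintype ι] [LinearOrder ι] [AddCommMonoid M]
    (P : ι → Prop) [DecidablePred P] (a : M) :
    ∑ i, (if P i ∧ ∀ j < i, ¬ P j then a else 0) = if ∃ i, P i then a else 0 := by
  by_cases hP : ∃ i, P i
  · obtain ⟨i₀, hi₀, hmin⟩ := wellFounded_lt.has_min {i | P i} hP
    have hleast : ∀ i, (P i ∧ ∀ j < i, ¬ P j) ↔ i = i₀ := by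
      refine fun i => ⟨fun ⟨hi, hlt⟩ => ?_, fun h => h ▸ ⟨hi₀, fun j hj hPj => hmin j hPj hj⟩⟩
      rcases lt_trichotomy i i₀ with h | h | h
      · exact absurd h (hmin i hi)
      · exact h
      · exact absurd hi₀ (hlt i₀ h)
    simp only [hleast, sum_ite_eq', mem_univ, if_true, if_pos hP]
  · push Not at hP
    simp [hP]

lemma eq_of_forall_update_eq {ι γ : Type*} [Fintype ι] [DecidableEq ι] {β : ι → Type*}
    (f : (∀ i, β i) → γ) (hf : ∀ i x c, f (update x i c) = f x) (x y : ∀ i, β i) :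
    f x = f y := by
  have key : ∀ s : Finset ι, f (fun i => if i ∈ s then y i else x i) = f x := by
    intro s
    induction s using Finset.induction_on with
    | empty => simp
    | insert a s _ ih =>
      have hfun : (fun i => if i ∈ insert a s then y i else x i) =
          update (fun i => if i ∈ s then y i else x i) a (y a) := by
        ext i
        by_cases hia : i = a
        · subst hia; simp
        · simp [hia]
      rw [hfun, hf, ih]
  simpa using (key univ).symm

section ZModLine

variable {N : ℕ} [NeZero N]

def zmodMean (u : ZMod N → ℝ) : ℝ := (∑ j, u j) / N

def cumulativeDeviation (u : ZMod N → ℝ) (a : ZMod N) : ℝ :=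
  ∑ j ∈ univ.filter (fun j : ZMod N => j.val ≤ a.val), (zmodMean u - u j)

lemma sum_zmodMean_sub (u : ZMod N → ℝ) : ∑ j, (zmodMean u - u j) = 0 := by
  have hN : (N : ℝ) ≠ 0 := Nat.cast_ne_zero.2 (NeZero.ne N)
  rw [sum_sub_distrib, sum_const, card_univ, ZMod.card, nsmul_eq_mul, zmodMean,
    mul_div_cancel₀ _ hN, sub_self]

lemma abs_zmodMean_le (u : ZMod N → ℝ) : |zmodMean u| ≤ (∑ j, |u j|) / N := by
  rw [zmodMean, abs_div, Nat.abs_cast]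
  gcongr
  exact abs_sum_le_sum_abs _ _

lemma abs_cumulativeDeviation_le (u : ZMod N → ℝ) (a : ZMod N) :
    |cumulativeDeviation u a| ≤ 2 * ∑ j, |u j| := by
  have hN : (0 : ℝ) < N := Nat.cast_pos.2 (NeZero.pos N)
  calc |cumulativeDeviation u a|
      ≤ ∑ j ∈ univ.filter (fun j : ZMod N => j.val ≤ a.val), (|zmodMean u| + |u j|) :=
        (abs_sum_le_sum_abs _ _).trans (sum_le_sum fun j _ => abs_sub _ _)
    _ ≤ ∑ j, (|zmodMean u| + |u j|) :=
        sum_le_sum_of_subset_of_nonneg (filter_subset _ _) fun _ _ _ => by positivity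
    _ = N * |zmodMean u| + ∑ j, |u j| := by
        rw [sum_add_distrib, sum_const, card_univ, ZMod.card, nsmul_eq_mul]
    _ ≤ 2 * ∑ j, |u j| := by
        have := abs_zmodMean_le u
        rw [le_div_iff₀ hN] at this
        linarith

lemma cumulativeDeviation_sub_sub_one [Fact (1 < N)] (u : ZMod N → ℝ) (a : ZMod N) :
    cumulativeDeviation u a - cumulativeDeviation u (a - 1) = zmodMean u - u a := by
  by_cases ha : a = 0
  · -- at `a - 1 = -1` the cumulative sum runs over all of `ZMod N`, hence vanishes
    have hall : univ.filter (fun j : ZMod N => j.val ≤ (a - 1).val) = univ := by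
      refine filter_true_of_mem fun j _ => ?_
      rw [ha, zero_sub, ZMod.neg_val, if_neg one_ne_zero, ZMod.val_one]
      have := ZMod.val_lt j
      omega
    have hzero : univ.filter (fun j : ZMod N => j.val ≤ a.val) = {a} := by
      ext j
      simp [ha, ZMod.val_eq_zero]
    rw [cumulativeDeviation, cumulativeDeviation, hall, sum_zmodMean_sub, hzero, sum_singleton,
      sub_zero]
  · have ha' : a.val ≠ 0 := (ZMod.val_ne_zero a).2 ha
    have hval : (a - 1).val = a.val - 1 := by
      rw [ZMod.val_sub (by rw [ZMod.val_one]; omega), ZMod.val_one]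
    have hinsert : univ.filter (fun j : ZMod N => j.val ≤ a.val) =
        insert a (univ.filter (fun j : ZMod N => j.val ≤ (a - 1).val)) := by
      ext j
      simp only [mem_filter, mem_univ, true_and, mem_insert, hval,
        ← (ZMod.val_injective N).eq_iff]
      omega
    rw [cumulativeDeviation, cumulativeDeviation, hinsert, sum_insert (by simp [hval]; omega)]
    ring

end ZModLine

variable {d N : ℕ}

def coordFlow (k : Fin d) (F : Torus d N → ℝ) (x x' : Torus d N) : ℝ :=
  (if x' = x + Pi.single k 1 then F x else 0) - (if x = x' + Pi.single k 1 then F x' else 0)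

lemma abs_coordFlow_le (k : Fin d) {F : Torus d N → ℝ} {C : ℝ} (hF : ∀ y, |F y| ≤ C)
    (x x' : Torus d N) : |coordFlow k F x x'| ≤ 2 * C := by
  have hC : 0 ≤ C := (abs_nonneg _).trans (hF x)
  have hite : ∀ (p : Prop) [Decidable p] (y : Torus d N), |if p then F y else 0| ≤ C :=
    fun p _ y => by split_ifs <;> simp [hF y, hC]
  calc |coordFlow k F x x'| ≤ C + C := (abs_sub _ _).trans (add_le_add (hite _ x) (hite _ x'))
    _ = 2 * C := by ring

lemma update_sub_single (x : Torus d N) (k : Fin d) (c j : ZMod N) :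
    update (x - Pi.single k c) k j = update x k j := by
  ext i
  by_cases hik : i = k
  · subst hik; simp
  · simp [hik]

lemma torusFlowSup_le {J : Torus d N → Torus d N → ℝ} {C : ℝ}
    (hJ : ∀ x x', |J x x'| ≤ C) : torusFlowSup J ≤ C :=
  ciSup_le fun p => hJ p.1 p.2

section LineAverages

variable [NeZero N]

lemma abs_le_torusSupNorm (f : Torus d N → ℝ) (x : Torus d N) : |f x| ≤ torusSupNorm f :=
  le_ciSup (f := fun x => |f x|) (Set.finite_range _).bddAbove x

lemma nu_sum {ι : Type*} (s : Finset ι) (f : ι → Torus d N → ℝ) :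
    nu d N (∑ i ∈ s, f i) = ∑ i ∈ s, nu d N (f i) := by
  simp only [nu, tsum_fintype, Finset.sum_apply]
  rw [sum_comm, sum_div]

lemma torusDiv_eq_sum_of_isFlow {J : Torus d N → Torus d N → ℝ} (hJ : IsFlow torusAdj J)
    (x : Torus d N) : torusDiv J x = ∑ x', J x x' := by
  rw [torusDiv, tsum_fintype]
  refine sum_congr rfl fun x' _ => ?_
  by_cases h : torusAdj x x'
  · rw [if_pos h]
  · rw [if_neg h, (hJ x x').2 h]

lemma torusDiv_add {I J : Torus d N → Torus d N → ℝ} (hI : IsFlow torusAdj I)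
    (hJ : IsFlow torusAdj J) (x : Torus d N) :
    torusDiv (I + J) x = torusDiv I x + torusDiv J x := by
  simp only [torusDiv_eq_sum_of_isFlow (isFlow_add hI hJ), torusDiv_eq_sum_of_isFlow hI,
    torusDiv_eq_sum_of_isFlow hJ, Pi.add_apply, sum_add_distrib]

lemma torusDiv_sum {ι : Type*} (s : Finset ι) {J : ι → Torus d N → Torus d N → ℝ}
    (hJ : ∀ i ∈ s, IsFlow torusAdj (J i)) (x : Torus d N) :
    torusDiv (∑ i ∈ s, J i) x = ∑ i ∈ s, torusDiv (J i) x := by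
  rw [torusDiv_eq_sum_of_isFlow (isFlow_sum s hJ), sum_congr rfl fun i hi =>
    torusDiv_eq_sum_of_isFlow (hJ i hi) x, sum_comm]
  simp only [Finset.sum_apply]

def lineAvg (k : Fin d) (h : Torus d N → ℝ) (x : Torus d N) : ℝ :=
  zmodMean fun j => h (update x k j)

def lineFlow (k : Fin d) (h : Torus d N → ℝ) : Torus d N → Torus d N → ℝ :=
  coordFlow k fun x => cumulativeDeviation (fun j => h (update x k j)) (x k)

def iterLineAvg : List (Fin d) → (Torus d N → ℝ) → Torus d N → ℝ
  | [], h => h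
  | k :: L, h => iterLineAvg L (lineAvg k h)

def avgFlow : List (Fin d) → (Torus d N → ℝ) → Torus d N → Torus d N → ℝ
  | [], _ => 0
  | k :: L, h => lineFlow k h + avgFlow L (lineAvg k h)

lemma sum_abs_update_le (k : Fin d) {h : Torus d N → ℝ} {B : ℝ} (hB : ∀ y, |h y| ≤ B)
    (y : Torus d N) : ∑ j, |h (update y k j)| ≤ N * B := by
  simpa using sum_le_sum fun j (_ : j ∈ univ) => hB (update y k j)

lemma abs_lineAvg_le (k : Fin d) {h : Torus d N → ℝ} {A : ℝ}
    (hA : ∀ y, ∑ j, |h (update y k j)| ≤ A) (x : Torus d N) : |lineAvg k h x| ≤ A / N :=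
  (abs_zmodMean_le _).trans (by gcongr; exact hA x)

lemma abs_lineFlow_le (k : Fin d) {h : Torus d N → ℝ} {A : ℝ}
    (hA : ∀ y, ∑ j, |h (update y k j)| ≤ A) (x x' : Torus d N) :
    |lineFlow k h x x'| ≤ 4 * A := by
  have hF : ∀ y, |cumulativeDeviation (fun j => h (update y k j)) (y k)| ≤ 2 * A :=
    fun y => (abs_cumulativeDeviation_le _ _).trans (by linarith [hA y])
  rw [lineFlow]
  linarith [abs_coordFlow_le k hF x x']

lemma abs_avgFlow_le (L : List (Fin d)) {h : Torus d N → ℝ} {B : ℝ} (hB : ∀ y, |h y| ≤ B)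
    (x x' : Torus d N) : |avgFlow L h x x'| ≤ L.length * (4 * (N * B)) := by
  induction L generalizing h with
  | nil => simp [avgFlow]
  | cons k L ih =>
    have hN : (N : ℝ) ≠ 0 := Nat.cast_ne_zero.2 (NeZero.ne N)
    have hA := sum_abs_update_le k hB
    have havg : ∀ y, |lineAvg k h y| ≤ B := fun y => by
      simpa [hN] using abs_lineAvg_le k hA y
    calc |avgFlow (k :: L) h x x'| ≤ |lineFlow k h x x'| + |avgFlow L (lineAvg k h) x x'| :=
          abs_add_le _ _
      _ ≤ 4 * (N * B) + L.length * (4 * (N * B)) :=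
          add_le_add (abs_lineFlow_le k hA x x') (ih havg)
      _ = (k :: L).length * (4 * (N * B)) := by push_cast [List.length_cons]; ring

lemma abs_avgFlow_cons_le (k : Fin d) (L : List (Fin d)) {h : Torus d N → ℝ} {A : ℝ}
    (hA : ∀ y, ∑ j, |h (update y k j)| ≤ A) (x x' : Torus d N) :
    |avgFlow (k :: L) h x x'| ≤ 4 * (L.length + 1) * A := by
  have hN : (N : ℝ) ≠ 0 := Nat.cast_ne_zero.2 (NeZero.ne N)
  calc |avgFlow (k :: L) h x x'| ≤ |lineFlow k h x x'| + |avgFlow L (lineAvg k h) x x'| :=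
        abs_add_le _ _
    _ ≤ 4 * A + L.length * (4 * (N * (A / N))) :=
        add_le_add (abs_lineFlow_le k hA x x') (abs_avgFlow_le L (abs_lineAvg_le k hA) x x')
    _ = 4 * (L.length + 1) * A := by field_simp; ring

lemma lineAvg_update {k k' : Fin d} {h : Torus d N → ℝ}
    (hk : k' = k ∨ ∀ y c, h (update y k c) = h y) (x : Torus d N) (c : ZMod N) :
    lineAvg k' h (update x k c) = lineAvg k' h x := by
  by_cases hkk : k' = k
  · subst hkk; simp [lineAvg]
  · have hh := hk.resolve_left hkk
    simp only [lineAvg, fun j => update_comm (Ne.symm hkk) c j x, hh]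

lemma iterLineAvg_update {k : Fin d} {L : List (Fin d)} {h : Torus d N → ℝ}
    (hk : k ∈ L ∨ ∀ y c, h (update y k c) = h y) (x : Torus d N) (c : ZMod N) :
    iterLineAvg L h (update x k c) = iterLineAvg L h x := by
  induction L generalizing h with
  | nil => exact hk.resolve_left List.not_mem_nil _ _
  | cons k' L ih =>
    refine ih ?_
    rcases hk with hk | hh
    · rcases List.mem_cons.1 hk with rfl | hk
      · exact .inr (lineAvg_update (.inl rfl))
      · exact .inl hk
    · exact .inr (lineAvg_update (.inr hh))

lemma sum_lineAvg (k : Fin d) (h : Torus d N → ℝ) : ∑ x, lineAvg k h x = ∑ x, h x := by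
  have hN : (N : ℝ) ≠ 0 := Nat.cast_ne_zero.2 (NeZero.ne N)
  -- `(x, j) ↦ (update x k j, x k)` is an involution of `Torus d N × ZMod N`
  have hswap :
      ∑ p : Torus d N × ZMod N, h (update p.1 k p.2) = ∑ p : Torus d N × ZMod N, h p.1 :=
    Fintype.sum_equiv
      { toFun := fun p => (update p.1 k p.2, p.1 k)
        invFun := fun p => (update p.1 k p.2, p.1 k)
        left_inv := fun p => by simp
        right_inv := fun p => by simp } _ _ fun p => rfl
  simp only [lineAvg, zmodMean, ← sum_div, div_eq_iff hN]
  rw [← Fintype.sum_prod_type', hswap, Fintype.sum_prod_type, sum_mul]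
  simp [mul_comm]

lemma sum_iterLineAvg (L : List (Fin d)) (h : Torus d N → ℝ) :
    ∑ x, iterLineAvg L h x = ∑ x, h x := by
  induction L generalizing h with
  | nil => rfl
  | cons k L ih => rw [iterLineAvg, ih, sum_lineAvg]

lemma iterLineAvg_eq_nu {L : List (Fin d)} (hL : ∀ k, k ∈ L) (h : Torus d N → ℝ)
    (x : Torus d N) : iterLineAvg L h x = nu d N h := by
  have hconst : ∀ y, iterLineAvg L h y = iterLineAvg L h x := fun y =>
    eq_of_forall_update_eq _ (fun k => iterLineAvg_update (.inl (hL k))) y x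
  have hN : (N : ℝ) ^ d ≠ 0 := pow_ne_zero d (Nat.cast_ne_zero.2 (NeZero.ne N))
  rw [nu, tsum_fintype, ← sum_iterLineAvg L, sum_congr rfl fun y _ => hconst y]
  simp [hN]

end LineAverages

section Divergence

variable [Fact (1 < N)]

lemma torusAdj_add_single (x : Torus d N) (k : Fin d) {c : ZMod N} (hc : c = 1 ∨ c = -1) :
    torusAdj x (x + Pi.single k c) := by
  have hval : min (-c).val (N - (-c).val) = 1 := by
    have h1 : (1 : ZMod N).val = 1 := ZMod.val_one N
    have h2 := ZMod.neg_val (1 : ZMod N)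
    rw [if_neg one_ne_zero, h1] at h2
    have := (Fact.out : 1 < N)
    rcases hc with rfl | rfl <;> simp only [neg_neg, h1, h2] <;> omega
  rw [torusAdj, sum_eq_single k (fun i _ hik => by simp [hik]) (by simp)]
  simpa using hval

lemma isFlow_coordFlow (k : Fin d) (F : Torus d N → ℝ) : IsFlow torusAdj (coordFlow k F) := by
  refine fun x x' => ⟨fun _ => by rw [coordFlow, coordFlow]; ring, fun hadj => ?_⟩
  have hup : x' ≠ x + Pi.single k 1 := fun h => hadj (h ▸ torusAdj_add_single x k (.inl rfl))
  have hdown : x ≠ x' + Pi.single k 1 := fun h => hadj <| by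
    rw [eq_comm, ← eq_sub_iff_add_eq, sub_eq_add_neg, ← Pi.single_neg] at h
    exact h ▸ torusAdj_add_single x k (.inr rfl)
  rw [coordFlow, if_neg hup, if_neg hdown, sub_zero]

lemma torusDiv_coordFlow (k : Fin d) (F : Torus d N → ℝ) (x : Torus d N) :
    torusDiv (coordFlow k F) x = F x - F (x - Pi.single k 1) := by
  simp only [torusDiv_eq_sum_of_isFlow (isFlow_coordFlow k F), coordFlow, sum_sub_distrib,
    sum_ite_eq', mem_univ, if_true, eq_comm (a := x), ← eq_sub_iff_add_eq]

lemma isFlow_lineFlow (k : Fin d) (h : Torus d N → ℝ) : IsFlow torusAdj (lineFlow k h) :=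
  isFlow_coordFlow k _

lemma torusDiv_lineFlow (k : Fin d) (h : Torus d N → ℝ) (x : Torus d N) :
    torusDiv (lineFlow k h) x = lineAvg k h x - h x := by
  simp only [lineFlow, torusDiv_coordFlow, update_sub_single, Pi.sub_apply, Pi.single_eq_same,
    cumulativeDeviation_sub_sub_one, update_eq_self, lineAvg]

lemma isFlow_avgFlow (L : List (Fin d)) (h : Torus d N → ℝ) :
    IsFlow torusAdj (avgFlow L h) := by
  induction L generalizing h with
  | nil => exact isFlow_zero
  | cons k L ih => exact isFlow_add (isFlow_lineFlow k h) (ih _)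

lemma torusDiv_avgFlow (L : List (Fin d)) (h : Torus d N → ℝ) (x : Torus d N) :
    torusDiv (avgFlow L h) x = iterLineAvg L h x - h x := by
  induction L generalizing h with
  | nil => simp [avgFlow, iterLineAvg, torusDiv_eq_sum_of_isFlow isFlow_zero]
  | cons k L ih =>
    rw [avgFlow, torusDiv_add (isFlow_lineFlow k h) (isFlow_avgFlow L _), torusDiv_lineFlow, ih,
      iterLineAvg]
    ring

end Divergence

section Faces

def faceComponent (g : Torus d N → ℝ) (i : Fin d) (x : Torus d N) : ℝ :=
  if (x i = 0 ∨ x i = -1) ∧ ∀ j < i, ¬ (x j = 0 ∨ x j = -1) then g x else 0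

lemma exists_eq_zero_or_eq_neg_one_of_mem_torusBdry {x : Torus d N} (hx : x ∈ torusBdry d N) :
    ∃ i, x i = 0 ∨ x i = -1 := by
  obtain ⟨z, ⟨-, i, hi⟩, rfl⟩ := hx
  refine ⟨i, hi.imp (fun h => ?_) fun h => ?_⟩ <;> simp [latProj, h]

lemma sum_faceComponent {g : Torus d N → ℝ} (hg : ∀ x ∉ torusBdry d N, g x = 0)
    (x : Torus d N) : ∑ i, faceComponent g i x = g x := by
  have hsum : ∑ i, faceComponent g i x = if ∃ i, x i = 0 ∨ x i = -1 then g x else 0 := by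
    simp only [faceComponent]
    convert sum_ite_isLeast (fun i => x i = 0 ∨ x i = -1) (g x)
  rw [hsum]
  split_ifs with hx
  · rfl
  · exact (hg x fun hmem => hx (exists_eq_zero_or_eq_neg_one_of_mem_torusBdry hmem)).symm

variable [NeZero N]

lemma sum_abs_faceComponent_update_le {g : Torus d N → ℝ} {M : ℝ} (hM : ∀ y, |g y| ≤ M)
    (i : Fin d) (y : Torus d N) : ∑ j, |faceComponent g i (update y i j)| ≤ 2 * M := by
  have hM0 : 0 ≤ M := (abs_nonneg _).trans (hM y)
  have hle : ∀ x, |faceComponent g i x| ≤ M := fun x => by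
    unfold faceComponent; split_ifs <;> simp [hM, hM0]
  have hzero : ∀ j ∉ ({0, -1} : Finset (ZMod N)), |faceComponent g i (update y i j)| = 0 := by
    intro j hj
    simp only [mem_insert, mem_singleton, not_or] at hj
    simp [faceComponent, hj]
  rw [← sum_subset (subset_univ _) fun j _ hj => hzero j hj]
  calc ∑ j ∈ {0, -1}, |faceComponent g i (update y i j)|
        ≤ ∑ j ∈ ({0, -1} : Finset (ZMod N)), M := sum_le_sum fun j _ => hle _
    _ ≤ 2 * M := by
        rw [sum_const, nsmul_eq_mul]
        gcongr
        exact_mod_cast card_le_two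

end Faces

end TorusFlow

open TorusFlow

/-- There is `c = c(d)` such that for every `N ≥ 2` and every `g` on the torus
vanishing outside `S` (the image of the interior boundary of the box), there is a flow `J` with
`div J + g ≡ ν(g)` and `|J|_∞ ≤ c |g|_∞`. -/
theorem statement7 (d : ℕ) (hd : 1 ≤ d) :
    ∃ c : ℝ, 0 < c ∧ ∀ N : ℕ, 2 ≤ N → ∀ g : Torus d N → ℝ,
      (∀ x ∉ torusBdry d N, g x = 0) →
      ∃ J : Torus d N → Torus d N → ℝ, IsFlow torusAdj J ∧
        (∀ x, torusDiv J x + g x = nu d N g) ∧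
        torusFlowSup J ≤ c * torusSupNorm g := by
  have hd' : (0 : ℝ) < d := Nat.cast_pos.2 hd
  refine ⟨8 * d * (d + 1), by positivity, fun N hN g hg => ?_⟩
  have : Fact (1 < N) := ⟨hN⟩
  let J : Fin d → Torus d N → Torus d N → ℝ := fun i =>
    avgFlow (i :: List.finRange d) (faceComponent g i)
  have hJ : ∀ i ∈ univ, IsFlow torusAdj (J i) := fun i _ => isFlow_avgFlow _ _
  refine ⟨∑ i, J i, isFlow_sum _ hJ, fun x => ?_, torusFlowSup_le fun x x' => ?_⟩
  · have hg' : g = ∑ i, faceComponent g i := funext fun y => by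
      rw [Finset.sum_apply, sum_faceComponent hg]
    rw [torusDiv_sum _ hJ]
    simp only [J, torusDiv_avgFlow, iterLineAvg_eq_nu (fun k => List.mem_cons_of_mem _
      (List.mem_finRange k)), sum_sub_distrib, sum_faceComponent hg]
    rw [hg', nu_sum, ← hg']
    ring
  · have hM := abs_le_torusSupNorm g
    calc |(∑ i, J i) x x'| ≤ ∑ i, |J i x x'| := by
          rw [Finset.sum_apply, Finset.sum_apply]; exact abs_sum_le_sum_abs _ _
      _ ≤ ∑ _i : Fin d, 4 * (d + 1) * (2 * torusSupNorm g) := sum_le_sum fun i _ => by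
          simpa using abs_avgFlow_cons_le i (List.finRange d)
            (sum_abs_faceComponent_update_le hM i) x x'
      _ = 8 * d * (d + 1) * torusSupNorm g := by simp; ring
end
end

section
/- Let d ≥ 1. There is a constant c depending only on d such that for every N ≥ 1 and every function h : T_N → ℝ, there exists a flow L on the edges of T_N with div L(x) + h(x) = ν(h) for every x ∈ T_N, and |L|_∞ ≤ c N |h|_∞. -/
open Filter Topology

noncomputable section

/-!
Put `g = ν(h) - h`, a function of mean zero. Averaging `g` successively over the coordinates
`0, 1, …, d - 1` gives `H₀ = g, H₁, …, H_d = 0`, with `|H_k| ≤ |g|_∞`. The increment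
`H_k - H_{k+1}` sums to zero along every line in direction `k`, so its prefix sums along these
cycles form a potential `F_k` with `F_k(x) - F_k(x - e_k) = H_k(x) - H_{k+1}(x)` and
`|F_k| ≤ 2N |g|_∞`. Sending `F_k(x)` through every edge `x → x + e_k` gives a flow whose
divergence telescopes to `H₀ - H_d = g`.
-/

open Finset

section CumSum

variable {N : ℕ} [NeZero N]

def cumSum (f : ZMod N → ℝ) (t : ZMod N) : ℝ :=
  ∑ s with s.val ≤ t.val, f s

lemma val_sub_one_of_ne_zero {t : ZMod N} (ht : t ≠ 0) : (t - 1).val = t.val - 1 := by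
  have hpos : 0 < t.val := ZMod.val_pos.2 ht
  have : Fact (1 < N) := ⟨lt_of_le_of_lt hpos t.val_lt⟩
  rw [ZMod.val_sub (by rwa [ZMod.val_one]), ZMod.val_one]

lemma val_neg_one_eq : (-1 : ZMod N).val = N - 1 := by
  obtain ⟨n, rfl⟩ := Nat.exists_eq_succ_of_ne_zero (NeZero.ne N)
  simp [ZMod.val_neg_one n]

lemma cumSum_sub_cumSum_sub_one {f : ZMod N → ℝ} (hf : ∑ s, f s = 0) (t : ZMod N) :
    cumSum f t - cumSum f (t - 1) = f t := by
  by_cases ht : t = 0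
  · subst ht
    have hall : cumSum f (0 - 1) = ∑ s, f s := by
      rw [cumSum, zero_sub, val_neg_one_eq, Finset.filter_true_of_mem]
      exact fun s _ => Nat.le_sub_one_of_lt s.val_lt
    have hzero : cumSum f 0 = f 0 := by
      simp [cumSum, ZMod.val_eq_zero, Finset.filter_eq']
    rw [hall, hzero, hf, sub_zero]
  · simp only [cumSum, val_sub_one_of_ne_zero ht, Finset.sum_filter, ← Finset.sum_sub_distrib]
    have hval : t.val ≠ 0 := fun h => ht ((ZMod.val_eq_zero t).1 h)
    refine (Finset.sum_congr rfl fun s _ => ?_).trans (Fintype.sum_ite_eq' t f)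
    have hst : s = t ↔ s.val = t.val := ZMod.val_injective N |>.eq_iff.symm
    simp only [hst]
    split_ifs <;> first | (exfalso; omega) | ring

lemma abs_cumSum_le {f : ZMod N → ℝ} {M : ℝ} (hf : ∀ s, |f s| ≤ M) (t : ZMod N) :
    |cumSum f t| ≤ N * M := by
  have hM : 0 ≤ M := (abs_nonneg _).trans (hf 0)
  calc |cumSum f t| ≤ ∑ s with s.val ≤ t.val, |f s| := Finset.abs_sum_le_sum_abs _ _
    _ ≤ (#({s | s.val ≤ t.val} : Finset (ZMod N))) * M := by
      simpa using Finset.sum_le_card_nsmul _ _ M fun s _ => hf s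
    _ ≤ N * M := by
      gcongr
      simpa using Finset.card_filter_le (Finset.univ : Finset (ZMod N)) _

end CumSum

section SlabAverage

variable {d N : ℕ} [NeZero N] (g : Torus d N → ℝ)

def slabSum (k : ℕ) (x : Torus d N) : ℝ :=
  ∑ y with ∀ i : Fin d, k ≤ i → y i = x i, g y

def partialAvg (k : ℕ) (x : Torus d N) : ℝ := slabSum g k x / (N : ℝ) ^ k

def avgIncrement (k : ℕ) (x : Torus d N) : ℝ := partialAvg g k x - partialAvg g (k + 1) x

lemma slabSum_zero (x : Torus d N) : slabSum g 0 x = g x := by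
  simp [slabSum, ← funext_iff, Finset.filter_eq']

lemma slabSum_of_le {k : ℕ} (hk : d ≤ k) (x : Torus d N) : slabSum g k x = ∑ y, g y := by
  rw [slabSum, Finset.filter_true_of_mem]
  intro y _ i hi
  exact absurd (i.is_lt.trans_le hk) (not_lt.2 hi)

lemma slabSum_succ_update (k : Fin d) (x : Torus d N) (t : ZMod N) :
    slabSum g (k + 1) (Function.update x k t) = slabSum g (k + 1) x := by
  have hfar : ∀ i : Fin d, (k : ℕ) + 1 ≤ i → Function.update x k t i = x i :=
    fun i hi => Function.update_of_ne (fun h => by subst h; omega) _ _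
  unfold slabSum
  congr 1
  exact Finset.filter_congr fun y _ => forall_congr' fun i => imp_congr_right fun hi => by
    simp only [hfar i hi]

lemma sum_slabSum_update (k : Fin d) (x : Torus d N) :
    ∑ t, slabSum g k (Function.update x k t) = slabSum g (k + 1) x := by
  rw [slabSum, ← Finset.sum_fiberwise _ (fun y : Torus d N => y k)]
  refine Finset.sum_congr rfl fun t _ => ?_
  rw [slabSum, Finset.filter_filter]
  refine Finset.sum_congr (Finset.filter_congr fun y _ => ⟨fun hy => ⟨fun i hi => ?_, ?_⟩, ?_⟩)
    fun _ _ => rfl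
  · rw [hy i (by omega), Function.update_of_ne (fun h => by subst h; omega)]
  · simpa using hy k le_rfl
  · rintro ⟨hy, rfl⟩ i hi
    rcases eq_or_ne i k with rfl | hik
    · simp
    · rw [Function.update_of_ne hik]
      exact hy i (by have := Fin.val_ne_of_ne hik; omega)

lemma sum_avgIncrement_update (k : Fin d) (x : Torus d N) :
    ∑ t, avgIncrement g k (Function.update x k t) = 0 := by
  have hN : (N : ℝ) ≠ 0 := Nat.cast_ne_zero.2 (NeZero.ne N)
  simp only [avgIncrement, partialAvg, Finset.sum_sub_distrib, ← Finset.sum_div,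
    sum_slabSum_update, slabSum_succ_update, Finset.sum_const, Finset.card_univ, ZMod.card,
    nsmul_eq_mul, pow_succ]
  field_simp
  ring

lemma sum_range_avgIncrement (hg : ∑ y, g y = 0) (x : Torus d N) :
    ∑ k ∈ Finset.range d, avgIncrement g k x = g x := by
  simp only [avgIncrement]
  rw [Finset.sum_range_sub' (fun k => partialAvg g k x), partialAvg, partialAvg, slabSum_zero,
    slabSum_of_le g le_rfl, hg]
  simp

lemma abs_partialAvg_le {M : ℝ} (hM : ∀ y, |g y| ≤ M) {k : ℕ} (hk : k ≤ d) (x : Torus d N) :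
    |partialAvg g k x| ≤ M := by
  induction k generalizing x with
  | zero => simpa [partialAvg, slabSum_zero] using hM x
  | succ k ih =>
    have hN : (0 : ℝ) < N := Nat.cast_pos.2 (Nat.pos_of_neZero N)
    have hrec : partialAvg g (k + 1) x
        = (∑ t, partialAvg g k (Function.update x ⟨k, hk⟩ t)) / N := by
      rw [partialAvg, ← sum_slabSum_update g ⟨k, hk⟩, pow_succ, ← div_div, Finset.sum_div]
      rfl
    rw [hrec, abs_div, abs_of_pos hN, div_le_iff₀ hN]
    calc |∑ t, partialAvg g k (Function.update x ⟨k, hk⟩ t)|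
        ≤ ∑ t, |partialAvg g k (Function.update x ⟨k, hk⟩ t)| := Finset.abs_sum_le_sum_abs _ _
      _ ≤ ∑ _t : ZMod N, M := Finset.sum_le_sum fun t _ => ih (by omega) _
      _ = M * N := by simp [mul_comm]

lemma abs_avgIncrement_le {M : ℝ} (hM : ∀ y, |g y| ≤ M) {k : ℕ} (hk : k < d)
    (x : Torus d N) : |avgIncrement g k x| ≤ 2 * M :=
  (abs_sub _ _).trans <| by
    linarith [abs_partialAvg_le g hM hk.le x, abs_partialAvg_le g hM (Nat.succ_le_of_lt hk) x]

end SlabAverage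

section Potential

variable {d N : ℕ}

lemma sub_single_eq_update (x : Torus d N) (k : Fin d) :
    x - Pi.single k 1 = Function.update x k (x k - 1) := by
  ext i
  rcases eq_or_ne i k with rfl | hik <;> simp [*]

variable [NeZero N] (g : Torus d N → ℝ)

def avgPotential (k : Fin d) (x : Torus d N) : ℝ :=
  cumSum (fun t => avgIncrement g k (Function.update x k t)) (x k)

lemma avgPotential_sub_avgPotential (k : Fin d) (x : Torus d N) :
    avgPotential g k x - avgPotential g k (x - Pi.single k 1) = avgIncrement g k x := by
  simp only [avgPotential, sub_single_eq_update, Function.update_self, Function.update_idem]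
  rw [cumSum_sub_cumSum_sub_one (sum_avgIncrement_update g k x), Function.update_eq_self]

lemma abs_avgPotential_le {M : ℝ} (hM : ∀ y, |g y| ≤ M) (k : Fin d) (x : Torus d N) :
    |avgPotential g k x| ≤ N * (2 * M) :=
  abs_cumSum_le (fun _ => abs_avgIncrement_le g hM k.is_lt _) _

end Potential

section EdgeFlow

variable {d N : ℕ}

-- For `N = 2` the points `x + e_k` and `x - e_k` coincide, and both terms contribute.
def edgeFlow (F : Fin d → Torus d N → ℝ) (x x' : Torus d N) : ℝ :=
  ∑ k, ((if x' = x + Pi.single k 1 then F k x else 0) -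
    (if x = x' + Pi.single k 1 then F k x' else 0))

lemma abs_edgeFlow_le {F : Fin d → Torus d N → ℝ} {B : ℝ} (hF : ∀ k y, |F k y| ≤ B)
    (x x' : Torus d N) : |edgeFlow F x x'| ≤ d * (2 * B) := by
  have hite : ∀ (p : Prop) [Decidable p] (k : Fin d) (y : Torus d N),
      |if p then F k y else 0| ≤ B := fun p _ k y => by
    split_ifs
    · exact hF k y
    · simpa using (abs_nonneg _).trans (hF k y)
  calc |edgeFlow F x x'| ≤ ∑ k : Fin d, (B + B) := by
        refine (Finset.abs_sum_le_sum_abs _ _).trans (Finset.sum_le_sum fun k _ => ?_)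
        exact (abs_sub _ _).trans (add_le_add (hite _ k x) (hite _ k x'))
    _ = d * (2 * B) := by simp; ring

variable [NeZero N]

lemma torusAdj_add_single (hN : 2 ≤ N) (x : Torus d N) (k : Fin d) {s : ZMod N}
    (hs : s = 1 ∨ s = -1) : torusAdj x (x + Pi.single k s) := by
  have : Fact (1 < N) := ⟨hN⟩
  have hcoord : ∀ i, min (-(Pi.single k s : Torus d N) i).val
      (N - (-(Pi.single k s : Torus d N) i).val) = if i = k then 1 else 0 := by
    intro i
    rcases eq_or_ne i k with rfl | hik
    · rcases hs with rfl | rfl <;> simp [val_neg_one_eq, ZMod.val_one] <;> omega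
    · simp [hik]
  simp only [torusAdj, Pi.add_apply, sub_add_cancel_left]
  simp [hcoord]

lemma isFlow_edgeFlow (hN : 2 ≤ N) (F : Fin d → Torus d N → ℝ) :
    IsFlow torusAdj (edgeFlow F) := by
  refine fun x x' => ⟨fun _ => ?_, fun hadj => Finset.sum_eq_zero fun k _ => ?_⟩
  · rw [edgeFlow, edgeFlow, ← Finset.sum_neg_distrib]
    simp only [neg_sub]
  · have hplus : x' ≠ x + Pi.single k 1 := fun h => hadj (h ▸ torusAdj_add_single hN x k (.inl rfl))
    have hminus : x ≠ x' + Pi.single k 1 := fun h => hadj <| by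
      rw [show x' = x + Pi.single k (-1) by
        rw [h, add_assoc, ← Pi.single_add, add_neg_cancel, Pi.single_zero, add_zero]]
      exact torusAdj_add_single hN x k (.inr rfl)
    simp [hplus, hminus]

lemma torusDiv_eq_sum_of_isFlow {L : Torus d N → Torus d N → ℝ} (hL : IsFlow torusAdj L)
    (x : Torus d N) : torusDiv L x = ∑ x', L x x' := by
  rw [torusDiv, tsum_fintype]
  exact Finset.sum_congr rfl fun x' _ => by
    by_cases hadj : torusAdj x x'
    · rw [if_pos hadj]
    · rw [if_neg hadj, (hL x x').2 hadj]

lemma sum_edgeFlow (F : Fin d → Torus d N → ℝ) (x : Torus d N) :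
    ∑ x', edgeFlow F x x' = ∑ k, (F k x - F k (x - Pi.single k 1)) := by
  simp only [edgeFlow]
  rw [Finset.sum_comm]
  refine Finset.sum_congr rfl fun k _ => ?_
  have hback : ∀ x' : Torus d N, x = x' + Pi.single k 1 ↔ x' = x - Pi.single k 1 :=
    fun x' => by rw [eq_sub_iff_add_eq, eq_comm]
  simp [Finset.sum_sub_distrib, hback]

end EdgeFlow

section Torus

variable {d N : ℕ}

lemma torusFlowSup_le {L : Torus d N → Torus d N → ℝ} {B : ℝ} (hB : ∀ x x', |L x x'| ≤ B) :
    torusFlowSup L ≤ B :=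
  ciSup_le fun p => hB p.1 p.2

variable [NeZero N]

theorem exists_isFlow_torusDiv_eq (g : Torus d N → ℝ) (hg : ∑ y, g y = 0) {M : ℝ}
    (hM : ∀ y, |g y| ≤ M) :
    ∃ L : Torus d N → Torus d N → ℝ, IsFlow torusAdj L ∧ (∀ x, torusDiv L x = g x) ∧
      ∀ x x', |L x x'| ≤ d * (2 * (N * (2 * M))) := by
  obtain hN | hN : N = 1 ∨ 2 ≤ N := by have := NeZero.ne N; omega
  · subst hN
    have hg0 : ∀ x, g x = 0 := fun x => by rwa [Fintype.sum_subsingleton _ x] at hg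
    have hM0 : 0 ≤ M := (abs_nonneg _).trans (hM 0)
    refine ⟨fun _ _ => 0, fun _ _ => ⟨fun _ => neg_zero.symm, fun _ => rfl⟩, fun x => ?_,
      fun _ _ => by simp only [abs_zero]; positivity⟩
    simp [torusDiv, hg0]
  · refine ⟨edgeFlow (avgPotential g), isFlow_edgeFlow hN _, fun x => ?_,
      abs_edgeFlow_le (abs_avgPotential_le g hM)⟩
    rw [torusDiv_eq_sum_of_isFlow (isFlow_edgeFlow hN _), sum_edgeFlow]
    simp only [avgPotential_sub_avgPotential]
    rw [Fin.sum_univ_eq_sum_range (fun k => avgIncrement g k x), sum_range_avgIncrement g hg]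

lemma abs_le_torusSupNorm (h : Torus d N → ℝ) (x : Torus d N) : |h x| ≤ torusSupNorm h :=
  le_ciSup (f := fun x => |h x|) (Set.finite_range _).bddAbove x

lemma sum_nu_sub (h : Torus d N → ℝ) : ∑ x, (nu d N h - h x) = 0 := by
  have hN : (N : ℝ) ^ d ≠ 0 := pow_ne_zero _ (Nat.cast_ne_zero.2 (NeZero.ne N))
  simp only [Finset.sum_sub_distrib, Finset.sum_const, Finset.card_univ, Fintype.card_pi,
    ZMod.card, Finset.prod_const, Fintype.card_fin, nsmul_eq_mul, nu, tsum_fintype]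
  push_cast
  field_simp
  ring

lemma abs_nu_le (h : Torus d N → ℝ) : |nu d N h| ≤ torusSupNorm h := by
  have hN : (0 : ℝ) < (N : ℝ) ^ d := pow_pos (Nat.cast_pos.2 (Nat.pos_of_neZero N)) _
  rw [nu, tsum_fintype, abs_div, abs_of_pos hN, div_le_iff₀ hN]
  calc |∑ x, h x| ≤ ∑ x, |h x| := Finset.abs_sum_le_sum_abs _ _
    _ ≤ ∑ _x : Torus d N, torusSupNorm h := Finset.sum_le_sum fun x _ => abs_le_torusSupNorm h x
    _ = torusSupNorm h * (N : ℝ) ^ d := by simp [mul_comm]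

end Torus

theorem statement8_general (d : ℕ) :
    ∃ c : ℝ, 0 < c ∧ ∀ N : ℕ, 1 ≤ N → ∀ h : Torus d N → ℝ,
      ∃ L : Torus d N → Torus d N → ℝ, IsFlow torusAdj L ∧
        (∀ x, torusDiv L x + h x = nu d N h) ∧
        torusFlowSup L ≤ c * (N : ℝ) * torusSupNorm h := by
  refine ⟨8 * d + 1, by positivity, fun N hN h => ?_⟩
  have : NeZero N := ⟨by omega⟩
  have hg : ∀ x, |nu d N h - h x| ≤ 2 * torusSupNorm h := fun x =>
    (abs_sub _ _).trans (by linarith [abs_nu_le h, abs_le_torusSupNorm h x])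
  obtain ⟨L, hL, hdiv, hbound⟩ := exists_isFlow_torusDiv_eq _ (sum_nu_sub h) hg
  refine ⟨L, hL, fun x => by rw [hdiv]; ring, torusFlowSup_le fun x x' => (hbound x x').trans ?_⟩
  have hNS : 0 ≤ (N : ℝ) * torusSupNorm h :=
    mul_nonneg (Nat.cast_nonneg N) ((abs_nonneg _).trans (abs_le_torusSupNorm h 0))
  nlinarith

/-- There is `c = c(d)` such that for every `N ≥ 1` and every `h` on the torus
there is a flow `L` with `div L + h ≡ ν(h)` and `|L|_∞ ≤ c N |h|_∞`. -/
theorem statement8 (d : ℕ) (hd : 1 ≤ d) :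
    ∃ c : ℝ, 0 < c ∧ ∀ N : ℕ, 1 ≤ N → ∀ h : Torus d N → ℝ,
      ∃ L : Torus d N → Torus d N → ℝ, IsFlow torusAdj L ∧
        (∀ x, torusDiv L x + h x = nu d N h) ∧
        torusFlowSup L ≤ c * (N : ℝ) * torusSupNorm h :=
  statement8_general d
end
end

section
/- Let d ≥ 1. There is a constant c depending only on d such that for every N ≥ 2 and every function g : T_N → ℝ vanishing outside S (the image in T_N of the interior boundary of the box {0,…,N−1}^d), there exists a flow K on the edges of T_N with |K|_∞ ≤ c |g|_∞ and |div K(x) + g(x)| ≤ c |g|_∞ / N for every x ∈ T_N. -/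
open Filter Topology

noncomputable section

/-!
Each point of `S` is assigned to the first direction `i` in which it lies on a face of the box
(`z i = 0` or `z i = -1` in `ZMod N`), and each direction is handled separately on the lines
parallel to `e_i`. On such a cycle of length `N`, the mass `g z` of a point `z` assigned to `i` is
absorbed at `z` and re-emitted as `g z / N` at every point of the cycle: the flow doing this
carries `g z * (x i - z i).val / N` across the edge `(x, x + e_i)`. A cycle meets the two faces
orthogonal to `e_i` in at most two points, so this flow is bounded by `2 |g|_∞`, and the
divergence error `(1 / N) ∑_z g z` it leaves is at most `2 |g|_∞ / N` per direction.
-/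

open Finset

lemma ZMod.val_sub_one_add_one {N : ℕ} [NeZero N] (v : ZMod N) :
    (v - 1).val + 1 = if v = 0 then N else v.val := by
  obtain ⟨n, rfl⟩ : ∃ n, N = n + 1 := ⟨N - 1, by have := NeZero.pos N; omega⟩
  split_ifs with hv
  · simp [hv, ZMod.val_neg_one]
  · have hv' := ZMod.val_pos.mpr hv
    have hlt := ZMod.val_lt v
    have h1 : (1 : ZMod (n + 1)).val = 1 := by
      rw [ZMod.val_one_eq_one_mod, Nat.mod_eq_of_lt (by omega)]
    rw [ZMod.val_sub (by rw [h1]; exact hv'), h1]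
    omega

lemma sum_ite_first_eq {ι M : Type*} [Fintype ι] [LinearOrder ι] [AddCommMonoid M]
    (P : ι → Prop) [DecidablePred P] [DecidablePred fun i => ∀ j < i, ¬P j] (a : M) :
    ∑ i, (if P i ∧ ∀ j < i, ¬P j then a else 0) = if ∃ i, P i then a else 0 := by
  split_ifs with h
  · obtain ⟨i₀, hi₀, hmin⟩ := wellFounded_lt.has_min {i | P i} h
    have hfirst : ∀ j < i₀, ¬P j := fun j hj hPj => hmin j hPj hj
    refine (sum_eq_single i₀ (fun j _ hj => if_neg ?_) (by simp)).trans
      (if_pos ⟨hi₀, hfirst⟩)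
    rintro ⟨hPj, hjfirst⟩
    rcases lt_or_gt_of_ne hj with hlt | hlt
    · exact hfirst j hlt hPj
    · exact hjfirst i₀ hlt hi₀
  · exact sum_eq_zero fun i _ => if_neg fun hi => h ⟨i, hi.1⟩

section TorusFlow

variable {d N : ℕ}

def unitVec (i : Fin d) : Torus d N := Pi.single i 1

lemma torusAdj_of_sub_eq_single {x y : Torus d N} {i : Fin d} {a : ZMod N}
    (h : x - y = Pi.single i a) (ha : min a.val (N - a.val) = 1) : torusAdj x y := by
  unfold torusAdj
  rw [sum_eq_single i (fun j _ hj => by simp [← Pi.sub_apply, h, Pi.single_eq_of_ne hj])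
    (by simp), ← Pi.sub_apply, h, Pi.single_eq_same, ha]

lemma torusAdj_add_unitVec (hN : 2 ≤ N) (x : Torus d N) (i : Fin d) :
    torusAdj x (x + unitVec i) := by
  obtain ⟨n, rfl⟩ : ∃ n, N = n + 1 := ⟨N - 1, by omega⟩
  refine torusAdj_of_sub_eq_single (a := -1) (i := i) (by simp [unitVec, Pi.single_neg]) ?_
  rw [ZMod.val_neg_one]
  omega

lemma add_unitVec_torusAdj (hN : 2 ≤ N) (x : Torus d N) (i : Fin d) :
    torusAdj (x + unitVec i) x := by
  have : Fact (1 < N) := ⟨hN⟩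
  refine torusAdj_of_sub_eq_single (a := 1) (i := i) (by simp [unitVec]) ?_
  rw [ZMod.val_one]
  omega

lemma unitVec_injective (hN : 2 ≤ N) : Function.Injective (unitVec : Fin d → Torus d N) := by
  have : Fact (1 < N) := ⟨hN⟩
  intro i j h
  by_contra hij
  simpa [unitVec, Pi.single_eq_of_ne hij] using congrFun h i

def axialFlow (F : Fin d → Torus d N → ℝ) (x y : Torus d N) : ℝ :=
  ∑ i, ((if y = x + unitVec i then F i x else 0) - (if x = y + unitVec i then F i y else 0))

lemma axialFlow_antisymm (F : Fin d → Torus d N → ℝ) (x y : Torus d N) :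
    axialFlow F x y = -axialFlow F y x := by
  simp only [axialFlow, ← sum_neg_distrib, neg_sub]

lemma axialFlow_eq_zero_of_not_adj (hN : 2 ≤ N) (F : Fin d → Torus d N → ℝ)
    {x y : Torus d N} (h : ¬torusAdj x y) : axialFlow F x y = 0 :=
  sum_eq_zero fun i _ => by
    rw [if_neg fun (hy : y = x + unitVec i) => h (hy ▸ torusAdj_add_unitVec hN x i),
      if_neg fun (hx : x = y + unitVec i) => h (hx ▸ add_unitVec_torusAdj hN y i), sub_zero]

lemma isFlow_axialFlow (hN : 2 ≤ N) (F : Fin d → Torus d N → ℝ) :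
    IsFlow torusAdj (axialFlow F) :=
  fun x y => ⟨fun _ => axialFlow_antisymm F x y, axialFlow_eq_zero_of_not_adj hN F⟩

lemma torusDiv_axialFlow [NeZero N] (hN : 2 ≤ N) (F : Fin d → Torus d N → ℝ)
    (x : Torus d N) :
    torusDiv (axialFlow F) x = ∑ i, (F i x - F i (x - unitVec i)) := by
  have hdiv : torusDiv (axialFlow F) x = ∑ y, axialFlow F x y := by
    rw [torusDiv, tsum_fintype]
    refine sum_congr rfl fun y _ => ?_
    split_ifs with h
    · rfl
    · exact (axialFlow_eq_zero_of_not_adj hN F h).symm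
  have hback : ∀ (i : Fin d) (y : Torus d N), x = y + unitVec i ↔ y = x - unitVec i :=
    fun i y => by rw [eq_sub_iff_add_eq, eq_comm]
  simp only [hdiv, axialFlow]
  rw [sum_comm]
  simp only [sum_sub_distrib, hback, sum_ite_eq', mem_univ, if_true]

lemma abs_sum_ite_add_unitVec_le (hN : 2 ≤ N) {F : Fin d → Torus d N → ℝ} {B : ℝ}
    (hB : 0 ≤ B) (hF : ∀ i x, |F i x| ≤ B) (x y : Torus d N) :
    |∑ i, if y = x + unitVec i then F i x else 0| ≤ B := by
  by_cases h : ∃ i, y = x + unitVec i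
  · obtain ⟨i, rfl⟩ := h
    rw [sum_eq_single i (fun j _ hj => if_neg fun hij => hj (unitVec_injective hN
      (add_left_cancel hij)).symm) (by simp), if_pos rfl]
    exact hF i x
  · rwa [sum_eq_zero fun i _ => if_neg fun hi => h ⟨i, hi⟩, abs_zero]

lemma abs_axialFlow_le (hN : 2 ≤ N) {F : Fin d → Torus d N → ℝ} {B : ℝ} (hB : 0 ≤ B)
    (hF : ∀ i x, |F i x| ≤ B) (x y : Torus d N) : |axialFlow F x y| ≤ 2 * B := by
  rw [axialFlow, sum_sub_distrib, two_mul]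
  exact (abs_sub _ _).trans (add_le_add (abs_sum_ite_add_unitVec_le hN hB hF x y)
    (abs_sum_ite_add_unitVec_le hN hB hF y x))

end TorusFlow

section Faces

variable {d N : ℕ}

def OnFace (i : Fin d) (z : Torus d N) : Prop := z i = 0 ∨ z i = -1

instance (i : Fin d) : DecidablePred (OnFace (N := N) i) := fun z => by
  unfold OnFace; infer_instance

lemma exists_onFace_of_mem_torusBdry {x : Torus d N} (hx : x ∈ torusBdry d N) :
    ∃ i, OnFace i x := by
  obtain ⟨z, ⟨-, i, hi⟩, rfl⟩ := hx
  exact ⟨i, hi.imp (by simp [latProj, ·]) (by simp [latProj, ·])⟩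

def faceEnds (i : Fin d) (x : Torus d N) : Finset (Torus d N) :=
  {Function.update x i 0, Function.update x i (-1)}

lemma faceEnds_sub_unitVec (i : Fin d) (x : Torus d N) :
    faceEnds i (x - unitVec i) = faceEnds i x := by
  have h : ∀ c : ZMod N, Function.update (x - unitVec i) i c = Function.update x i c := by
    intro c
    ext j
    rcases eq_or_ne j i with rfl | hj
    · simp
    · simp [Function.update_of_ne hj, unitVec, Pi.single_eq_of_ne hj]
  simp only [faceEnds, h]

lemma self_mem_faceEnds {i : Fin d} {x : Torus d N} (hx : OnFace i x) : x ∈ faceEnds i x := by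
  rcases hx with hx | hx <;> simp [faceEnds, ← hx]

lemma eq_of_mem_faceEnds {i : Fin d} {x z : Torus d N} (hz : z ∈ faceEnds i x)
    (hzi : z i = x i) : z = x := by
  simp only [faceEnds, mem_insert, mem_singleton] at hz
  rcases hz with rfl | rfl <;> simpa [eq_comm] using hzi

lemma abs_sum_faceEnds_le {t : Torus d N → ℝ} {M : ℝ} (ht : ∀ z, |t z| ≤ M)
    (i : Fin d) (x : Torus d N) : |∑ z ∈ faceEnds i x, t z| ≤ 2 * M := by
  have hM : 0 ≤ M := (abs_nonneg _).trans (ht x)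
  calc |∑ z ∈ faceEnds i x, t z| ≤ ∑ z ∈ faceEnds i x, |t z| := abs_sum_le_sum_abs _ _
    _ ≤ #(faceEnds i x) • M := sum_le_card_nsmul _ _ _ fun z _ => ht z
    _ ≤ 2 * M := by
      have hcard : (#(faceEnds i x) : ℝ) ≤ 2 := by exact_mod_cast card_le_two
      rw [nsmul_eq_mul]
      exact mul_le_mul_of_nonneg_right hcard hM

def faceFlux (h : Torus d N → ℝ) (i : Fin d) (x : Torus d N) : ℝ :=
  ∑ z ∈ faceEnds i x, h z * (x i - z i).val / N

lemma abs_faceFlux_le [NeZero N] {h : Torus d N → ℝ} {M : ℝ} (hM : ∀ z, |h z| ≤ M)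
    (i : Fin d) (x : Torus d N) : |faceFlux h i x| ≤ 2 * M := by
  refine abs_sum_faceEnds_le (fun z => ?_) i x
  have hN : (0 : ℝ) < N := by exact_mod_cast NeZero.pos N
  have hval : ((x i - z i).val : ℝ) / N ≤ 1 :=
    (div_le_one hN).mpr (by exact_mod_cast (ZMod.val_lt _).le)
  rw [mul_div_assoc, abs_mul, abs_of_nonneg (by positivity : (0 : ℝ) ≤ (x i - z i).val / N)]
  exact (mul_le_of_le_one_right (abs_nonneg _) hval).trans (hM z)

lemma faceFlux_sub_faceFlux [NeZero N] {h : Torus d N → ℝ} {i : Fin d}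
    (hh : ∀ z, h z ≠ 0 → OnFace i z) (x : Torus d N) :
    faceFlux h i x - faceFlux h i (x - unitVec i) = (∑ z ∈ faceEnds i x, h z) / N - h x := by
  have hN : (N : ℝ) ≠ 0 := by exact_mod_cast NeZero.ne N
  have hterm : ∀ z, h z * (x i - z i).val / N - h z * (x i - 1 - z i).val / N
      = h z / N - if x i = z i then h z else 0 := by
    intro z
    have hval := ZMod.val_sub_one_add_one (x i - z i)
    rw [sub_right_comm] at hval
    simp only [sub_eq_zero] at hval
    have hval' : ((x i - 1 - z i).val : ℝ) + 1
        = if x i = z i then (N : ℝ) else (x i - z i).val := by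
      exact_mod_cast hval
    rw [eq_sub_of_add_eq hval']
    split_ifs with hxz
    · rw [hxz, sub_self, ZMod.val_zero]; field_simp; ring
    · field_simp; ring
  have hsrc : ∑ z ∈ faceEnds i x, (if x i = z i then h z else 0) = h x := by
    refine (sum_eq_single x (fun z hz hzx => if_neg fun hzi =>
      hzx (eq_of_mem_faceEnds hz hzi.symm)) (fun hx => ?_)).trans (if_pos rfl)
    rw [if_pos rfl]
    by_contra hne
    exact hx (self_mem_faceEnds (hh x hne))
  have hxi : (x - unitVec i : Torus d N) i = x i - 1 := by simp [unitVec]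
  rw [faceFlux, faceFlux, faceEnds_sub_unitVec, hxi, ← sum_sub_distrib]
  simp only [hterm, sum_sub_distrib, sum_div, hsrc]

def faceSource (g : Torus d N → ℝ) (i : Fin d) (z : Torus d N) : ℝ :=
  if OnFace i z ∧ ∀ j < i, ¬OnFace j z then g z else 0

lemma onFace_of_faceSource_ne_zero {g : Torus d N → ℝ} {i : Fin d} {z : Torus d N}
    (h : faceSource g i z ≠ 0) : OnFace i z := by
  by_contra hz
  exact h (if_neg fun hz' => hz hz'.1)

lemma abs_faceSource_le {g : Torus d N → ℝ} {M : ℝ} (hM : ∀ z, |g z| ≤ M) (i : Fin d)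
    (z : Torus d N) : |faceSource g i z| ≤ M := by
  unfold faceSource
  split_ifs
  · exact hM z
  · simpa using (abs_nonneg _).trans (hM z)

lemma sum_faceSource {g : Torus d N → ℝ} (hg : ∀ x ∉ torusBdry d N, g x = 0)
    (x : Torus d N) :
    ∑ i, faceSource g i x = g x := by
  unfold faceSource
  refine (sum_ite_first_eq (fun i => OnFace i x) (g x)).trans ?_
  split_ifs with h
  · rfl
  · exact (hg x fun hx => h (exists_onFace_of_mem_torusBdry hx)).symm

def boundaryFlow (g : Torus d N → ℝ) : Torus d N → Torus d N → ℝ :=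
  axialFlow fun i => faceFlux (faceSource g i) i

lemma abs_boundaryFlow_le [NeZero N] (hN : 2 ≤ N) {g : Torus d N → ℝ} {M : ℝ}
    (hM : ∀ z, |g z| ≤ M) (x y : Torus d N) : |boundaryFlow g x y| ≤ 4 * M := by
  have hM0 : 0 ≤ M := (abs_nonneg _).trans (hM x)
  have := abs_axialFlow_le hN (by positivity)
    (fun i => abs_faceFlux_le (abs_faceSource_le hM i) i) x y
  unfold boundaryFlow
  linarith

lemma torusDiv_boundaryFlow_add [NeZero N] (hN : 2 ≤ N) {g : Torus d N → ℝ}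
    (hg : ∀ x ∉ torusBdry d N, g x = 0) (x : Torus d N) :
    torusDiv (boundaryFlow g) x + g x = (∑ i, ∑ z ∈ faceEnds i x, faceSource g i z) / N := by
  rw [boundaryFlow, torusDiv_axialFlow hN, ← sum_faceSource hg x, ← sum_add_distrib, sum_div]
  refine sum_congr rfl fun i _ => ?_
  rw [faceFlux_sub_faceFlux (fun _ => onFace_of_faceSource_ne_zero)]
  ring

lemma abs_torusDiv_boundaryFlow_add_le [NeZero N] (hN : 2 ≤ N) {g : Torus d N → ℝ}
    (hg : ∀ x ∉ torusBdry d N, g x = 0) {M : ℝ} (hM : ∀ z, |g z| ≤ M) (x : Torus d N) :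
    |torusDiv (boundaryFlow g) x + g x| ≤ 2 * d * M / N := by
  rw [torusDiv_boundaryFlow_add hN hg, abs_div, Nat.abs_cast]
  gcongr
  calc |∑ i, ∑ z ∈ faceEnds i x, faceSource g i z|
      ≤ ∑ i, |∑ z ∈ faceEnds i x, faceSource g i z| := abs_sum_le_sum_abs _ _
    _ ≤ ∑ _i : Fin d, 2 * M :=
      sum_le_sum fun i _ => abs_sum_faceEnds_le (abs_faceSource_le hM i) i x
    _ = 2 * d * M := by simp only [sum_const, card_univ, Fintype.card_fin, nsmul_eq_mul]; ring

end Faces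

theorem statement9_general (d : ℕ) :
    ∃ c : ℝ, 0 < c ∧ ∀ N : ℕ, 2 ≤ N → ∀ g : Torus d N → ℝ,
      (∀ x ∉ torusBdry d N, g x = 0) →
      ∃ K : Torus d N → Torus d N → ℝ, IsFlow torusAdj K ∧
        torusFlowSup K ≤ c * torusSupNorm g ∧
        (∀ x, |torusDiv K x + g x| ≤ c * torusSupNorm g / (N : ℝ)) := by
  refine ⟨2 * d + 4, by positivity, fun N hN g hg => ?_⟩
  have : NeZero N := ⟨by omega⟩
  have hgM : ∀ z, |g z| ≤ torusSupNorm g :=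
    fun z => le_ciSup (f := fun x => |g x|) (Set.finite_range _).bddAbove z
  have hM : 0 ≤ torusSupNorm g := (abs_nonneg _).trans (hgM 0)
  have hd : (0 : ℝ) ≤ d := d.cast_nonneg
  refine ⟨boundaryFlow g, isFlow_axialFlow hN _, ciSup_le fun p => ?_, fun x => ?_⟩
  · exact (abs_boundaryFlow_le hN hgM p.1 p.2).trans (by nlinarith)
  · exact (abs_torusDiv_boundaryFlow_add_le hN hg hgM x).trans (by gcongr; linarith)

/-- There is `c = c(d)` such that for every `N ≥ 2` and every `g` on the torus
vanishing outside `S`, there is a flow `K` with `|K|_∞ ≤ c |g|_∞` and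
`|div K(x) + g(x)| ≤ c |g|_∞ / N` for every `x`. -/
theorem statement9 (d : ℕ) (hd : 1 ≤ d) :
    ∃ c : ℝ, 0 < c ∧ ∀ N : ℕ, 2 ≤ N → ∀ g : Torus d N → ℝ,
      (∀ x ∉ torusBdry d N, g x = 0) →
      ∃ K : Torus d N → Torus d N → ℝ, IsFlow torusAdj K ∧
        torusFlowSup K ≤ c * torusSupNorm g ∧
        (∀ x, |torusDiv K x + g x| ≤ c * torusSupNorm g / (N : ℝ)) :=
  statement9_general d
end
end
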